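/- Let D ⊆ ℂ be a connected open set, let ω : D → ℝ, a, b : D → (0, ∞) be smooth with a + b = 2, and let ρ, φ, ψ : D → ℂ be smooth. Define the matrix-valued map U with rows (½ a_z/a + ½ ω_z + ρ + φ/a, −(ab)^{−1/2} conj(φ), i √a e^{ω/2}), ((ab)^{−1/2} e^{−ω} ψ, −½ b_z/b − ½ ω_z + ρ + φ/b, 0), (0, i √b e^{ω/2}, ρ). Then U(p) lies in the subspace g₀ ⊕ g₅ of sl(3,ℂ) (the sum of the eigenspaces of σ with eigenvalues 1 and ε⁻¹) for every p ∈ D if and only if φ ≡ 0, ρ ≡ 0 and a ≡ b ≡ 1 on D. -/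

import Mathlib

open Complex Matrix

noncomputable section

abbrev M3 := Matrix (Fin 3) (Fin 3) ℂ

/-- ε = exp(iπ/3). -/
def eps : ℂ := Complex.exp (Real.pi * Complex.I / 3)

/-- The matrix P with rows (0, ε², 0), (ε⁴, 0, 0), (0, 0, 1). -/
def Pm : M3 := !![0, eps ^ 2, 0; eps ^ 4, 0, 0; 0, 0, 1]

/-- σ(X) = −P Xᵀ P. -/
def sigmaL (X : M3) : M3 := -(Pm * Xᵀ * Pm)

/-- The eigenspace g_k = {X ∈ sl(3,ℂ) : σ(X) = εᵏ X}. -/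
def gk (k : ℕ) : Set M3 := {X : M3 | X.trace = 0 ∧ sigmaL X = eps ^ k • X}

/-- Wirtinger derivative F_z = ½(F_x − i F_y). -/
def wz {E : Type*} [NormedAddCommGroup E] [NormedSpace ℂ E] (F : ℂ → E) (p : ℂ) : E :=
  (2 : ℂ)⁻¹ • (fderiv ℝ F p 1 - Complex.I • fderiv ℝ F p Complex.I)

/-- The matrix 𝒰. -/
def Um (ω a b : ℂ → ℝ) (ρ φ ψ : ℂ → ℂ) (p : ℂ) : M3 :=
  !![(2 : ℂ)⁻¹ * wz (fun q => (a q : ℂ)) p / (a p : ℂ)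
        + (2 : ℂ)⁻¹ * wz (fun q => (ω q : ℂ)) p + ρ p + φ p / (a p : ℂ),
     -((Real.sqrt (a p * b p) : ℂ))⁻¹ * starRingEnd ℂ (φ p),
     Complex.I * (Real.sqrt (a p) : ℂ) * (Real.exp (ω p / 2) : ℂ);
     ((Real.sqrt (a p * b p) : ℂ))⁻¹ * (Real.exp (-(ω p)) : ℂ) * ψ p,
     -(2 : ℂ)⁻¹ * wz (fun q => (b q : ℂ)) p / (b p : ℂ)
        - (2 : ℂ)⁻¹ * wz (fun q => (ω q : ℂ)) p + ρ p + φ p / (b p : ℂ),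
     0;
     0, Complex.I * (Real.sqrt (b p) : ℂ) * (Real.exp (ω p / 2) : ℂ), ρ p]

lemma harg : (↑Real.pi * Complex.I / 3 : ℂ) = ↑(Real.pi/3) * Complex.I := by push_cast; ring

lemma heps_re : eps.re = 1/2 := by
  rw [eps, harg, Complex.exp_ofReal_mul_I_re, Real.cos_pi_div_three]

lemma heps_im : eps.im = Real.sqrt 3 / 2 := by
  rw [eps, harg, Complex.exp_ofReal_mul_I_im, Real.sin_pi_div_three]

lemma heps2 : eps ^ 2 = eps - 1 := by
  have h3 : Real.sqrt 3 * Real.sqrt 3 = 3 := Real.mul_self_sqrt (by norm_num)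
  apply Complex.ext <;>
    simp [pow_two, Complex.mul_re, Complex.mul_im, heps_re, heps_im] <;> nlinarith [h3]

lemma heps3 : eps ^ 3 = -1 := by linear_combination (eps + 1) * heps2

lemma heps6 : eps ^ 6 = 1 := by linear_combination (eps ^ 3 - 1) * heps3

lemma heps_im_ne : eps.im ≠ 0 := by
  rw [heps_im]; positivity

lemma hne0 : eps ≠ 0 := fun h => heps_im_ne (by rw [h]; simp)
lemma hne1 : eps - 1 ≠ 0 := fun h => heps_im_ne (by
  have := congrArg Complex.im h; simpa using this)
lemma hne1' : (1 : ℂ) - eps ≠ 0 := fun h => hne1 (by linear_combination -h)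
lemma hne2 : eps + 1 ≠ 0 := fun h => heps_im_ne (by
  have := congrArg Complex.im h; simpa using this)
lemma hne2' : (1 : ℂ) + eps ≠ 0 := fun h => hne2 (by linear_combination h)
lemma hne3 : eps - 2 ≠ 0 := fun h => heps_im_ne (by
  have := congrArg Complex.im h; simpa using this)

lemma sigma_entries (X : M3) : sigmaL X =
    !![-(eps^6 * X 1 1), -(eps^4 * X 0 1), -(eps^2 * X 2 1);
       -(eps^8 * X 1 0), -(eps^6 * X 0 0), -(eps^4 * X 2 0);
       -(eps^4 * X 1 2), -(eps^2 * X 0 2), -X 2 2] := by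
  ext i j
  fin_cases i <;> fin_cases j <;>
    simp [sigmaL, Pm, Matrix.mul_apply, Fin.sum_univ_three, Matrix.vecMul,
      Matrix.vecHead, Matrix.vecTail, dotProduct] <;> ring

lemma mem_g0 {X : M3} (h : X ∈ gk 0) :
    X 0 1 = 0 ∧ X 2 2 = 0 ∧ X 0 2 = 0 ∧ X 2 1 = 0 := by
  obtain ⟨-, hσ⟩ := h
  rw [sigma_entries] at hσ
  have h01 := Matrix.ext_iff.mpr hσ 0 1
  have h22 := Matrix.ext_iff.mpr hσ 2 2
  have h02 := Matrix.ext_iff.mpr hσ 0 2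
  have h21 := Matrix.ext_iff.mpr hσ 2 1
  simp [Matrix.smul_apply] at h01 h22 h02 h21
  have k01 : (1 - eps) * X 0 1 = 0 := by
    linear_combination -h01 - X 0 1 * eps * heps3
  have hX01 : X 0 1 = 0 := (mul_eq_zero.mp k01).resolve_left hne1'
  have hX22 : X 2 2 = 0 := by linear_combination (-1/2 : ℂ) * h22
  have k02 : (1 + eps) * X 0 2 = 0 := by
    linear_combination -h02 + eps^2 * h21 + eps * X 0 2 * heps3
  have hX02 : X 0 2 = 0 := (mul_eq_zero.mp k02).resolve_left hne2'
  have hX21 : X 2 1 = 0 := by rw [hX02] at h21; simpa using h21.symm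
  exact ⟨hX01, hX22, hX02, hX21⟩

lemma mem_g5 {X : M3} (h : X ∈ gk 5) :
    X 0 1 = 0 ∧ X 2 2 = 0 ∧ X 0 2 = X 2 1 := by
  obtain ⟨-, hσ⟩ := h
  rw [sigma_entries] at hσ
  have h01 := Matrix.ext_iff.mpr hσ 0 1
  have h22 := Matrix.ext_iff.mpr hσ 2 2
  have h02 := Matrix.ext_iff.mpr hσ 0 2
  simp [Matrix.smul_apply] at h01 h22 h02
  have k01 : eps ^ 4 * ((eps + 1) * X 0 1) = 0 := by linear_combination -h01
  have hX01 : X 0 1 = 0 := by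
    rcases mul_eq_zero.mp k01 with h | h
    · exact absurd h (pow_ne_zero 4 hne0)
    · exact (mul_eq_zero.mp h).resolve_left hne2
  have k22 : (eps - 2) * X 2 2 = 0 := by
    linear_combination h22 - X 2 2 * heps2 + eps^2 * X 2 2 * heps3
  have hX22 : X 2 2 = 0 := (mul_eq_zero.mp k22).resolve_left hne3
  have k02 : eps ^ 2 * (X 2 1 - X 0 2) = 0 := by
    linear_combination -h02 - eps^2 * X 0 2 * heps3
  have hX02 : X 0 2 = X 2 1 := by
    rcases mul_eq_zero.mp k02 with h | h
    · exact absurd h (pow_ne_zero 2 hne0)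
    · linear_combination -h
  exact ⟨hX01, hX22, hX02⟩

lemma g0_mem (u : ℂ) : !![u, 0, 0; 0, -u, 0; 0, 0, 0] ∈ gk 0 := by
  refine ⟨by simp [Matrix.trace_fin_three, Matrix.vecHead, Matrix.vecTail], ?_⟩
  rw [sigma_entries]
  ext i j
  fin_cases i <;> fin_cases j <;> simp [Matrix.smul_apply, Matrix.vecHead, Matrix.vecTail] <;>
    first
      | ring1
      | linear_combination u * heps6

lemma g5_mem (u v : ℂ) : !![0, 0, u; v, 0, 0; 0, u, 0] ∈ gk 5 := by
  refine ⟨by simp [Matrix.trace_fin_three, Matrix.vecHead, Matrix.vecTail], ?_⟩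
  rw [sigma_entries]
  ext i j
  fin_cases i <;> fin_cases j <;> simp [Matrix.smul_apply, Matrix.vecHead, Matrix.vecTail] <;>
    first
      | ring1
      | linear_combination (-(eps^2 * u)) * heps3
      | linear_combination (-(eps^2 * v)) * heps6 + (-(eps^2 * v)) * heps3


lemma wz_one {D : Set ℂ} (hD : IsOpen D) {p : ℂ} (hp : p ∈ D) {f : ℂ → ℂ}
    (hf : ∀ q ∈ D, f q = 1) : wz f p = 0 := by
  have hev : f =ᶠ[nhds p] (fun _ => (1 : ℂ)) :=
    Filter.eventuallyEq_of_mem (hD.mem_nhds hp) hf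
  rw [wz, hev.fderiv_eq]
  simp

/-- U takes values in g₀ ⊕ g₅ (the eigenspaces of σ for the eigenvalues 1 and ε⁻¹)
if and only if φ ≡ 0, ρ ≡ 0 and a ≡ b ≡ 1 on D. -/
theorem statement18 (D : Set ℂ) (hD : IsOpen D) (hconn : IsConnected D)
    (ω a b : ℂ → ℝ) (ρ φ ψ : ℂ → ℂ)
    (hω : ContDiffOn ℝ (⊤ : ℕ∞) ω D) (ha : ContDiffOn ℝ (⊤ : ℕ∞) a D) (hb : ContDiffOn ℝ (⊤ : ℕ∞) b D)
    (hρ : ContDiffOn ℝ (⊤ : ℕ∞) ρ D) (hφ : ContDiffOn ℝ (⊤ : ℕ∞) φ D) (hψ : ContDiffOn ℝ (⊤ : ℕ∞) ψ D)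
    (hapos : ∀ p ∈ D, 0 < a p) (hbpos : ∀ p ∈ D, 0 < b p)
    (hab : ∀ p ∈ D, a p + b p = 2) :
    (∀ p ∈ D, ∃ X₀ ∈ gk 0, ∃ X₅ ∈ gk 5, Um ω a b ρ φ ψ p = X₀ + X₅)
    ↔ (∀ p ∈ D, φ p = 0 ∧ ρ p = 0 ∧ a p = 1 ∧ b p = 1) := by
  constructor
  · intro H p hp
    obtain ⟨X₀, h₀, X₅, h₅, hU⟩ := H p hp
    obtain ⟨a01, a22, a02, a21⟩ := mem_g0 h₀
    obtain ⟨b01, b22, b0221⟩ := mem_g5 h₅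
    have e01 : Um ω a b ρ φ ψ p 0 1 = 0 := by
      rw [hU, Matrix.add_apply, a01, b01, add_zero]
    have e22 : Um ω a b ρ φ ψ p 2 2 = 0 := by
      rw [hU, Matrix.add_apply, a22, b22, add_zero]
    have e0221 : Um ω a b ρ φ ψ p 0 2 = Um ω a b ρ φ ψ p 2 1 := by
      rw [hU, Matrix.add_apply, Matrix.add_apply, a02, a21, b0221]
    have hsq : (0 : ℝ) < Real.sqrt (a p * b p) :=
      Real.sqrt_pos.mpr (mul_pos (hapos p hp) (hbpos p hp))
    have hφ0 : φ p = 0 := by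
      simp only [Um, Matrix.cons_val', Matrix.cons_val_zero, Matrix.cons_val_one,
        Matrix.head_cons, Matrix.empty_val', Matrix.cons_val_fin_one, Matrix.of_apply] at e01
      have h1 : ((Real.sqrt (a p * b p) : ℝ) : ℂ) ≠ 0 := by
        exact_mod_cast hsq.ne'
      field_simp at e01
      simpa using e01
    have hρ0 : ρ p = 0 := by
      simpa [Um] using e22
    have hsab : Real.sqrt (a p) = Real.sqrt (b p) := by
      simp only [Um, Matrix.cons_val', Matrix.cons_val_zero, Matrix.cons_val_one,
        Matrix.head_cons, Matrix.empty_val', Matrix.cons_val_fin_one, Matrix.of_apply] at e0221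
      have hexp : ((Real.exp (ω p / 2) : ℝ) : ℂ) ≠ 0 := by
        exact_mod_cast (Real.exp_pos _).ne'
      have h1 := mul_right_cancel₀ hexp e0221
      have h2 := mul_left_cancel₀ Complex.I_ne_zero h1
      exact_mod_cast h2
    have hab' : a p = b p := by
      have h1 := congrArg (· ^ 2) hsab
      simpa [Real.sq_sqrt (hapos p hp).le, Real.sq_sqrt (hbpos p hp).le] using h1
    have h2 := hab p hp
    exact ⟨hφ0, hρ0, by linarith, by linarith⟩
  · intro H p hp
    obtain ⟨hφ0, hρ0, ha1, hb1⟩ := H p hp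
    have hwa : wz (fun q => ((a q : ℝ) : ℂ)) p = 0 :=
      wz_one hD hp (fun q hq => by rw [(H q hq).2.2.1]; norm_num)
    have hwb : wz (fun q => ((b q : ℝ) : ℂ)) p = 0 :=
      wz_one hD hp (fun q hq => by rw [(H q hq).2.2.2]; norm_num)
    refine ⟨!![(2 : ℂ)⁻¹ * wz (fun q => ((ω q : ℝ) : ℂ)) p, 0, 0;
               0, -((2 : ℂ)⁻¹ * wz (fun q => ((ω q : ℝ) : ℂ)) p), 0;
               0, 0, 0], g0_mem _,
            !![0, 0, Complex.I * (Real.exp (ω p / 2) : ℂ);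
               (Real.exp (-(ω p)) : ℂ) * ψ p, 0, 0;
               0, Complex.I * (Real.exp (ω p / 2) : ℂ), 0], g5_mem _ _, ?_⟩
    ext i j
    fin_cases i <;> fin_cases j <;>
      simp [Um, Matrix.add_apply, hwa, hwb, ha1, hb1, hφ0, hρ0, Real.sqrt_one,
        Matrix.vecHead, Matrix.vecTail] <;>
      ring
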